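/- Let G be a finite group acting on a finite set X and let k ≥ 1. Then χ^(k)(X,G) = Σ_{[g]} χ^(k−1)(X^⟨g⟩, C_G(g)), where the sum is over the conjugacy classes [g] of elements of G, C_G(g) is the centralizer of g, X^⟨g⟩ is the fixed point set of g regarded as a C_G(g)-set, and the right-hand side is independent of the chosen representatives g. In other words, the closed formula (1/|G|)·Σ_{pairwise commuting (g₀,…,g_k) ∈ G^{k+1}} |X^⟨g₀,…,g_k⟩| satisfies the recursion defining the higher order orbifold Euler characteristics. -/

import Mathlib

open scoped BigOperators

/-- The centralizer `C_G(g)` acts on the fixed point set `X^⟨g⟩ = {x ∈ X : g x = x}`. -/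
instance centralizerFixedAction (G : Type*) [Group G] (X : Type*) [MulAction G X] (g : G) :
    MulAction ↥(Subgroup.centralizer {g}) {x : X // g • x = x} where
  smul h x := ⟨(h : G) • (x : X), by
    have hc : g * (h : G) = (h : G) * g := h.2 g (Set.mem_singleton g)
    rw [← mul_smul, hc, mul_smul, x.2]⟩
  one_smul x := by
    apply Subtype.ext
    show ((1 : Subgroup.centralizer {g}) : G) • (x : X) = (x : X)
    simp
  mul_smul h h' x := by
    apply Subtype.ext
    show ((h * h' : Subgroup.centralizer {g}) : G) • (x : X)
      = (h : G) • ((h' : G) • (x : X))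
    simp [mul_smul]

open scoped Classical in
/-- The orbifold Euler characteristic of order `k` of a `G`-space `X`:
`χ⁽ᵏ⁾(X,G) = (1/|G|) Σ_{pairwise commuting (g₀,…,g_k)} |X^⟨g₀,…,g_k⟩|`. -/
noncomputable def orbChi (k : ℕ) (G : Type*) [Group G] (X : Type*) [MulAction G X] : ℚ :=
  (∑ᶠ g : Fin (k + 1) → G,
      if ∀ i j, Commute (g i) (g j) then
        (Nat.card {x : X // ∀ i, g i • x = x} : ℚ)
      else 0) / (Nat.card G : ℚ)

/-!
Splitting a pairwise commuting tuple `(g₀, g₁, …, g_k)` as `g₀` followed by a commuting tuple in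
`C_G(g₀)`, whose common fixed points are those of `g₁, …, g_k` on `X^⟨g₀⟩`, gives
`|G| χ⁽ᵏ⁾(X,G) = Σ_g |C_G(g)| χ⁽ᵏ⁻¹⁾(X^⟨g⟩, C_G(g))`. Conjugation by `c` carries the pair
`(C_G(g), X^⟨g⟩)` isomorphically to `(C_G(cgc⁻¹), X^⟨cgc⁻¹⟩)`, so the summand is a class function,
and by orbit–stabilizer each conjugacy class contributes `|[g]| · |C_G(g)| = |G|` equal terms.
-/

open Subgroup

lemma forall_commute_cons_iff {M : Type*} [Mul M] {n : ℕ} (a : M) (t : Fin n → M) :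
    (∀ i j, Commute ((Fin.cons a t : Fin (n + 1) → M) i) ((Fin.cons a t : Fin (n + 1) → M) j)) ↔
      (∀ i, Commute a (t i)) ∧ ∀ i j, Commute (t i) (t j) := by
  simp only [Fin.forall_fin_succ, Fin.cons_zero, Fin.cons_succ, Commute.refl, true_and,
    Commute.symm_iff (a := t _) (b := a), forall_and]
  tauto

lemma Subgroup.nat_card_centralizer_mul_ncard_conj {G : Type*} [Group G] (g : G) :
    Nat.card (centralizer ({g} : Set G)) * {h | IsConj h g}.ncard = Nat.card G := by
  have horbit : MulAction.orbit (ConjAct G) g = {h | IsConj h g} :=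
    Set.ext fun _ => ConjAct.mem_orbit_conjAct
  rw [nat_card_centralizer_nat_card_stabilizer, ← horbit, ← MulAction.index_stabilizer,
    card_mul_index]
  rfl

def MulEquiv.centralizerSingleton {G H : Type*} [Group G] [Group H] (e : G ≃* H) (a : G) :
    centralizer ({a} : Set G) ≃* centralizer ({e a} : Set H) :=
  (e.subgroupMap _).trans <| MulEquiv.subgroupCongr <| by
    ext x
    obtain ⟨y, rfl⟩ := e.surjective x
    simp [mem_centralizer_singleton_iff, Subgroup.map_equiv_eq_comap_symm, ← map_mul]

lemma Subgroup.nat_card_centralizer_eq_of_isConj {G : Type*} [Group G] {a b : G}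
    (h : IsConj a b) :
    Nat.card (centralizer ({a} : Set G)) = Nat.card (centralizer ({b} : Set G)) := by
  obtain ⟨c, rfl⟩ := isConj_iff.mp h
  exact Nat.card_congr ((MulAut.conj c).centralizerSingleton a).toEquiv

section FixedPoints

variable {G : Type*} [Group G] {X : Type*} [MulAction G X]

def fixedPointsConsEquiv {n : ℕ} (a : G) (t : Fin n → centralizer ({a} : Set G)) :
    {x : X // ∀ i, (Fin.cons a (fun i => (t i : G)) : Fin (n + 1) → G) i • x = x} ≃
      {y : {x : X // a • x = x} // ∀ i, t i • y = y} where
  toFun x := ⟨⟨x, x.2 0⟩, fun i => Subtype.ext (x.2 i.succ)⟩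
  invFun y := ⟨y.1, Fin.cases y.1.2 fun i => congrArg Subtype.val (y.2 i)⟩
  left_inv _ := rfl
  right_inv _ := rfl

def fixedPointsConjEquiv (c a : G) :
    {x : X // a • x = x} ≃ {x : X // MulAut.conj c a • x = x} :=
  (MulAction.toPerm c).subtypeEquiv fun x => by simp [mul_smul]

end FixedPoints

lemma orbChi_congr {G G' : Type*} [Group G] [Group G'] {X X' : Type*} [MulAction G X]
    [MulAction G' X'] (e : G ≃* G') (f : X ≃ X') (hf : ∀ (g : G) (x : X), f (g • x) = e g • f x)
    (k : ℕ) : orbChi k G X = orbChi k G' X' := by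
  rw [orbChi, orbChi, Nat.card_congr e.toEquiv,
    ← finsum_comp_equiv (Equiv.piCongrRight fun _ => e.toEquiv)]
  congr 1
  refine finsum_congr fun g => ?_
  congr 1
  · exact propext (forall₂_congr fun i j => (commute_map_iff e.injective).symm)
  · refine congrArg Nat.cast (Nat.card_congr (f.subtypeEquiv fun x => forall_congr' fun i => ?_))
    rw [← f.apply_eq_iff_eq, hf]
    rfl

lemma orbChi_centralizer_fixedPoints_of_isConj {G : Type*} [Group G] {X : Type*} [MulAction G X]
    (k : ℕ) {a b : G} (h : IsConj a b) :
    orbChi k (centralizer ({a} : Set G)) {x : X // a • x = x}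
      = orbChi k (centralizer ({b} : Set G)) {x : X // b • x = x} := by
  obtain ⟨c, rfl⟩ := isConj_iff.mp h
  refine orbChi_congr ((MulAut.conj c).centralizerSingleton a) (fixedPointsConjEquiv c a)
    (fun d x => Subtype.ext ?_) k
  show c • (d : G) • (x : X) = (c * (d : G) * c⁻¹ : G) • c • (x : X)
  simp [mul_smul]

open scoped Classical in
noncomputable def commutingFixedPointSum (k : ℕ) (G : Type*) [Group G] (X : Type*)
    [MulAction G X] : ℚ :=
  ∑ᶠ g : Fin (k + 1) → G,
    if ∀ i j, Commute (g i) (g j) then (Nat.card {x : X // ∀ i, g i • x = x} : ℚ) else 0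

section CommutingFixedPointSum

variable {G : Type*} [Group G] {X : Type*} [MulAction G X]

lemma orbChi_eq_commutingFixedPointSum_div (k : ℕ) :
    orbChi k G X = commutingFixedPointSum k G X / Nat.card G :=
  rfl

lemma commutingFixedPointSum_eq_card_mul_orbChi [Finite G] (k : ℕ) :
    commutingFixedPointSum k G X = Nat.card G * orbChi k G X := by
  have hG : (Nat.card G : ℚ) ≠ 0 := Nat.cast_ne_zero.mpr Nat.card_pos.ne'
  rw [orbChi_eq_commutingFixedPointSum_div, mul_div_cancel₀ _ hG]

lemma commutingFixedPointSum_succ [Fintype G] (k : ℕ) :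
    commutingFixedPointSum (k + 1) G X
      = ∑ a : G, commutingFixedPointSum k (centralizer ({a} : Set G)) {x : X // a • x = x} := by
  classical
  rw [commutingFixedPointSum, finsum_eq_sum_of_fintype,
    ← (Fin.consEquiv fun _ => G).sum_comp, Fintype.sum_prod_type]
  refine Fintype.sum_congr _ _ fun a => ?_
  rw [commutingFixedPointSum, finsum_eq_sum_of_fintype]
  refine (Fintype.sum_of_injective (Subtype.val ∘ ·) Subtype.val_injective.comp_left _ _
    (fun t ht => ?_) (fun s => ?_)).symm
  · refine if_neg fun hcomm => ht ⟨fun i => ⟨t i, ?_⟩, rfl⟩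
    exact mem_centralizer_singleton_iff.mpr (((forall_commute_cons_iff a t).mp hcomm).1 i).symm.eq
  · have hcomm (i j) : Commute (s i) (s j) ↔ Commute (s i : G) (s j) :=
      (commute_map_iff (centralizer ({a} : Set G)).subtype_injective).symm
    congr 1
    · refine propext ?_
      simp only [Fin.consEquiv, Equiv.coe_fn_mk, forall_commute_cons_iff, hcomm]
      have hcent (i) : Commute a (s i) := (mem_centralizer_singleton_iff.mp (s i).2).symm
      exact (and_iff_right hcent).symm
    · exact congrArg Nat.cast (Nat.card_congr (fixedPointsConsEquiv a s)).symm

end CommutingFixedPointSum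

lemma sum_card_centralizer_smul_eq_card_smul_finsum {G : Type*} [Group G] [Fintype G]
    {M : Type*} [AddCommMonoid M] (f : G → M) (hf : ∀ a b, IsConj a b → f a = f b) :
    ∑ g, Nat.card (centralizer ({g} : Set G)) • f g
      = Nat.card G • ∑ᶠ q : Quot (IsConj (α := G)), f q.out := by
  classical
  have : Fintype (Quot (IsConj (α := G))) := Fintype.ofFinite _
  rw [finsum_eq_sum_of_fintype, Finset.smul_sum, ← Fintype.sum_fiberwise (Quot.mk IsConj)]
  refine Fintype.sum_congr _ _ fun q => ?_
  have hclass (g : G) : Quot.mk IsConj g = q ↔ IsConj g q.out :=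
    (congrArg _ q.out_eq.symm).to_iff.trans ConjClasses.mk_eq_mk_iff_isConj
  have hcard : Nat.card {g // Quot.mk IsConj g = q} = {g | IsConj g q.out}.ncard := by
    rw [← Nat.card_coe_set_eq]
    exact Nat.card_congr (Equiv.subtypeEquivRight hclass)
  calc ∑ g : {g // Quot.mk IsConj g = q}, Nat.card (centralizer ({(g : G)} : Set G)) • f g
      = ∑ _g : {g // Quot.mk IsConj g = q}, Nat.card (centralizer ({q.out} : Set G)) • f q.out :=
        Fintype.sum_congr _ _ fun g => by
          rw [nat_card_centralizer_eq_of_isConj ((hclass g).mp g.2), hf _ _ ((hclass g).mp g.2)]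
    _ = Nat.card G • f q.out := by
        rw [Finset.sum_const, smul_smul, Finset.card_univ, ← Nat.card_eq_fintype_card, hcard,
          mul_comm, nat_card_centralizer_mul_ncard_conj]

theorem orbChi_succ_eq_sum_over_conj_classes_general
    (G : Type*) [Group G] [Fintype G] (X : Type*) [MulAction G X]
    (k : ℕ) (hk : 1 ≤ k) :
    orbChi k G X
      = ∑ᶠ q : Quot (IsConj (α := G)),
          orbChi (k - 1) ↥(Subgroup.centralizer {q.out}) {x : X // q.out • x = x} := by
  obtain ⟨m, rfl⟩ := Nat.exists_eq_add_of_le' hk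
  have hG : (Nat.card G : ℚ) ≠ 0 := Nat.cast_ne_zero.mpr Nat.card_pos.ne'
  calc orbChi (m + 1) G X
      = (∑ a : G, Nat.card (centralizer ({a} : Set G)) •
          orbChi m (centralizer ({a} : Set G)) {x : X // a • x = x}) / Nat.card G := by
        rw [orbChi_eq_commutingFixedPointSum_div, commutingFixedPointSum_succ]
        simp only [commutingFixedPointSum_eq_card_mul_orbChi, nsmul_eq_mul]
    _ = _ := by
        rw [sum_card_centralizer_smul_eq_card_smul_finsum _
          fun a b h => orbChi_centralizer_fixedPoints_of_isConj m h, nsmul_eq_mul,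
          mul_div_cancel_left₀ _ hG, Nat.add_sub_cancel]

/-- **Recursion for the higher order orbifold Euler characteristics.** For a finite group `G`
acting on a finite set `X` and `k ≥ 1`: `χ⁽ᵏ⁾(X,G) = Σ_{[g]} χ⁽ᵏ⁻¹⁾(X^⟨g⟩, C_G(g))`, where
the sum runs over the conjugacy classes of elements of `G` (formalized as the quotient of `G`
by the conjugation relation `IsConj`, with `Quot.out` picking a representative — the summand
does not depend on this choice), and the fixed point set `X^⟨g⟩` is a `C_G(g)`-set. -/
theorem orbChi_succ_eq_sum_over_conj_classes
    (G : Type*) [Group G] [Fintype G] (X : Type*) [Fintype X] [MulAction G X]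
    (k : ℕ) (hk : 1 ≤ k) :
    orbChi k G X
      = ∑ᶠ q : Quot (IsConj (α := G)),
          orbChi (k - 1) ↥(Subgroup.centralizer {q.out}) {x : X // q.out • x = x} :=
  orbChi_succ_eq_sum_over_conj_classes_general G X k hk
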